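/- arXiv:2203.17268 — 3 statements merged into one kernel-verified Lean document; each statement's English description precedes it below -/
import Mathlib

section
/- Let $k \ge 1$ and let $\mathbf{m} = \sum_i \Delta_i$ and $\mathbf{m}' = \sum_j \Delta'_j$ be multisegments whose segments all have length $< k$. If the condition $\mathrm{LC}(\mathbf{m}, \mathbf{m}')$ holds, then the condition $\mathrm{LC}_k(\mathbf{m}, \mathbf{m}')$ holds. -/
/-- A segment is an integer interval, recorded by its endpoints `(a, b)`.
`Δ ≺ Δ'` : the segment `Δ` precedes `Δ'`. -/
def SegPrec (Δ Δ' : ℤ × ℤ) : Prop :=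
  Δ.1 + 1 ≤ Δ'.1 ∧ Δ'.1 ≤ Δ.2 + 1 ∧ Δ.2 + 1 ≤ Δ'.2

/-- `Δ ≺_k Δ'` : `Δ` k-precedes `Δ'`. -/
def SegPrecK (k : ℤ) (Δ Δ' : ℤ × ℤ) : Prop :=
  SegPrec Δ Δ' ∧ Δ'.2 - Δ.1 < k

/-- `←Δ = [a-1, b-1]`. -/
def shiftL (Δ : ℤ × ℤ) : ℤ × ℤ := (Δ.1 - 1, Δ.2 - 1)

/-- `X_{m,m'}` for multisegments `m = (Δ_i)`, `m' = (Δ'_j)`. -/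
def Xset {N N' : ℕ} (Δ : Fin N → ℤ × ℤ) (Δ' : Fin N' → ℤ × ℤ) :
    Set (Fin N × Fin N') := {p | SegPrec (Δ p.1) (Δ' p.2)}

/-- `Y_{m,m'}`. -/
def Yset {N N' : ℕ} (Δ : Fin N → ℤ × ℤ) (Δ' : Fin N' → ℤ × ℤ) :
    Set (Fin N × Fin N') := {p | SegPrec (shiftL (Δ p.1)) (Δ' p.2)}

/-- `X^{(k)}_{m,m'}`. -/
def XsetK (k : ℤ) {N N' : ℕ} (Δ : Fin N → ℤ × ℤ) (Δ' : Fin N' → ℤ × ℤ) :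
    Set (Fin N × Fin N') := {p | SegPrecK k (Δ p.1) (Δ' p.2)}

/-- `Y^{(k)}_{m,m'}`. -/
def YsetK (k : ℤ) {N N' : ℕ} (Δ : Fin N → ℤ × ℤ) (Δ' : Fin N' → ℤ × ℤ) :
    Set (Fin N × Fin N') := {p | SegPrecK k (shiftL (Δ p.1)) (Δ' p.2)}

/-- The condition `LC(m, m')` of Lapid–Mínguez. -/
def LC {N N' : ℕ} (Δ : Fin N → ℤ × ℤ) (Δ' : Fin N' → ℤ × ℤ) : Prop :=
  ∃ f : Fin N × Fin N' → Fin N × Fin N',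
    Set.InjOn f (Xset Δ Δ') ∧
    ∀ p ∈ Xset Δ Δ', f p ∈ Yset Δ Δ' ∧
      (((f p).1 = p.1 ∧ SegPrec (Δ' (f p).2) (Δ' p.2)) ∨
        ((f p).2 = p.2 ∧ SegPrec (Δ p.1) (Δ (f p).1)))

/-- The condition `LC_k(m, m')`. -/
def LCk (k : ℤ) {N N' : ℕ} (Δ : Fin N → ℤ × ℤ) (Δ' : Fin N' → ℤ × ℤ) : Prop :=
  ∃ f : Fin N × Fin N' → Fin N × Fin N',
    Set.InjOn f (XsetK k Δ Δ') ∧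
    ∀ p ∈ XsetK k Δ Δ', f p ∈ YsetK k Δ Δ' ∧
      (((f p).1 = p.1 ∧ SegPrecK k (Δ' (f p).2) (Δ' p.2)) ∨
        ((f p).2 = p.2 ∧ SegPrecK k (Δ p.1) (Δ (f p).1)))

theorem stmt9 (k : ℤ) (hk : 1 ≤ k) {N N' : ℕ}
    (Δ : Fin N → ℤ × ℤ) (Δ' : Fin N' → ℤ × ℤ)
    (hm : ∀ i, (Δ i).2 - (Δ i).1 + 1 < k)
    (hm' : ∀ j, (Δ' j).2 - (Δ' j).1 + 1 < k)
    (hLC : LC Δ Δ') : LCk k Δ Δ' := by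
  obtain ⟨f, hinj, hf⟩ := hLC
  refine ⟨f, hinj.mono fun p hp => hp.1, ?_⟩
  intro p hp
  obtain ⟨hX, hlt⟩ := hp
  obtain ⟨hY, hor⟩ := hf p hX
  obtain ⟨h1, h2, h3⟩ := hX
  obtain ⟨g1, g2, g3⟩ := hY
  simp only [shiftL] at g1 g2 g3
  rcases hor with ⟨he, ⟨p1, p2, p3⟩⟩ | ⟨he, ⟨p1, p2, p3⟩⟩
  · have g1' := g1; rw [he] at g1'
    refine ⟨⟨⟨g1, g2, g3⟩, ?_⟩, Or.inl ⟨he, ⟨p1, p2, p3⟩, ?_⟩⟩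
    · simp only [shiftL]; rw [he]; omega
    · omega
  · have g3' := g3; rw [he] at g3'
    refine ⟨⟨⟨g1, g2, g3⟩, ?_⟩, Or.inr ⟨he, ⟨p1, p2, p3⟩, ?_⟩⟩
    · simp only [shiftL]; rw [he]; omega
    · omega
end

section
/- Let $k \ge 1$ and let $\mathbf{m}, \mathbf{m}'$ be multisegments whose segments all have length $< k+1$. If $\mathrm{LC}_{k+1}(\mathbf{m}, \mathbf{m}')$ holds, then $\mathrm{LC}_k(\mathbf{m}, \mathbf{m}')$ holds. -/
theorem stmt10 (k : ℤ) (hk : 1 ≤ k) {N N' : ℕ}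
    (Δ : Fin N → ℤ × ℤ) (Δ' : Fin N' → ℤ × ℤ)
    (hm : ∀ i, (Δ i).2 - (Δ i).1 + 1 < k + 1)
    (hm' : ∀ j, (Δ' j).2 - (Δ' j).1 + 1 < k + 1)
    (hLC : LCk (k + 1) Δ Δ') : LCk k Δ Δ' := by
  obtain ⟨f, hinj, hf⟩ := hLC
  have hsub : XsetK k Δ Δ' ⊆ XsetK (k + 1) Δ Δ' := by
    intro p hp
    simp only [XsetK, Set.mem_setOf_eq, SegPrecK] at hp ⊢
    exact ⟨hp.1, by omega⟩
  refine ⟨f, hinj.mono hsub, fun p hp => ?_⟩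
  obtain ⟨hy, hcase⟩ := hf p (hsub hp)
  simp only [XsetK, Set.mem_setOf_eq, SegPrecK, SegPrec] at hp
  obtain ⟨⟨h1, h2, h3⟩, h4⟩ := hp
  simp only [YsetK, Set.mem_setOf_eq, SegPrecK, SegPrec, shiftL] at hy ⊢
  obtain ⟨⟨y1, y2, y3⟩, y4⟩ := hy
  rcases hcase with ⟨he, hs⟩ | ⟨he, hs⟩
  · simp only [SegPrecK, SegPrec] at hs
    obtain ⟨⟨s1, s2, s3⟩, s4⟩ := hs
    rw [he] at y1 y2 y3 y4
    refine ⟨⟨⟨?_, ?_, ?_⟩, ?_⟩, Or.inl ⟨he, ⟨s1, s2, s3⟩, ?_⟩⟩ <;>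
      first | (rw [he]; omega) | omega
  · simp only [SegPrecK, SegPrec] at hs
    obtain ⟨⟨s1, s2, s3⟩, s4⟩ := hs
    rw [he] at y1 y2 y3 y4
    refine ⟨⟨⟨?_, ?_, ?_⟩, ?_⟩, Or.inr ⟨he, ⟨s1, s2, s3⟩, ?_⟩⟩ <;>
      first | (rw [he]; omega) | omega
end

section
/- Let $k \ge 1$, let $\mathbf{m} = (\Delta_i)_{i \in I}$ and $\mathbf{m}' = (\Delta'_j)_{j \in J}$ be multisegments all of whose segments have length $< k$, and let $f$ be an injection witnessing $\mathrm{LC}(\mathbf{m},\mathbf{m}')$. Then the restriction of $f$ to $X^{(k)}_{\mathbf{m},\mathbf{m}'}$ takes values in $Y^{(k)}_{\mathbf{m},\mathbf{m}'}$; more precisely, if $(i,j) \in X^{(k)}_{\mathbf{m},\mathbf{m}'}$ and $f(i,j) = (i,j')$ with $\Delta'_{j'} \prec \Delta'_j$, then $\Delta'_{j'} \prec_k \Delta'_j$ and $\overleftarrow{\Delta_i} \prec_k \Delta'_{j'}$; and symmetrically if $f(i,j) = (i',j)$ with $\Delta_i \prec \Delta_{i'}$, then $\Delta_i \prec_k \Delta_{i'}$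 and $\overleftarrow{\Delta_{i'}} \prec_k \Delta'_j$. -/
theorem stmt11 (k : ℤ) (hk : 1 ≤ k) {N N' : ℕ}
    (Δ : Fin N → ℤ × ℤ) (Δ' : Fin N' → ℤ × ℤ)
    (hm : ∀ i, (Δ i).2 - (Δ i).1 + 1 < k)
    (hm' : ∀ j, (Δ' j).2 - (Δ' j).1 + 1 < k)
    (f : Fin N × Fin N' → Fin N × Fin N')
    (hinj : Set.InjOn f (Xset Δ Δ'))
    (hf : ∀ p ∈ Xset Δ Δ', f p ∈ Yset Δ Δ' ∧
      (((f p).1 = p.1 ∧ SegPrec (Δ' (f p).2) (Δ' p.2)) ∨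
        ((f p).2 = p.2 ∧ SegPrec (Δ p.1) (Δ (f p).1)))) :
    (∀ p ∈ XsetK k Δ Δ', f p ∈ YsetK k Δ Δ') ∧
    (∀ p ∈ XsetK k Δ Δ', (f p).1 = p.1 → SegPrec (Δ' (f p).2) (Δ' p.2) →
      SegPrecK k (Δ' (f p).2) (Δ' p.2) ∧
      SegPrecK k (shiftL (Δ p.1)) (Δ' (f p).2)) ∧
    (∀ p ∈ XsetK k Δ Δ', (f p).2 = p.2 → SegPrec (Δ p.1) (Δ (f p).1) →
      SegPrecK k (Δ p.1) (Δ (f p).1) ∧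
      SegPrecK k (shiftL (Δ (f p).1)) (Δ' p.2)) := by
  have key : ∀ p ∈ XsetK k Δ Δ',
      f p ∈ YsetK k Δ Δ' ∧
      ((f p).1 = p.1 → SegPrec (Δ' (f p).2) (Δ' p.2) →
        SegPrecK k (Δ' (f p).2) (Δ' p.2) ∧
        SegPrecK k (shiftL (Δ p.1)) (Δ' (f p).2)) ∧
      ((f p).2 = p.2 → SegPrec (Δ p.1) (Δ (f p).1) →
        SegPrecK k (Δ p.1) (Δ (f p).1) ∧
        SegPrecK k (shiftL (Δ (f p).1)) (Δ' p.2)) := by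
    intro p hp
    obtain ⟨hX, hb⟩ := hp
    obtain ⟨hY, hcase⟩ := hf p hX
    simp only [Xset, Yset, XsetK, YsetK, SegPrec, SegPrecK, shiftL, Set.mem_setOf_eq] at *
    rcases hcase with ⟨h1, h2⟩ | ⟨h1, h2⟩
    · rw [h1] at hY ⊢
      refine ⟨⟨hY, by omega⟩, fun _ _ => ⟨⟨h2, by omega⟩, ⟨hY, by omega⟩⟩, ?_⟩
      intro heq hpr
      refine ⟨⟨hpr, ?_⟩, ⟨by rw [heq] at hY; exact hY, ?_⟩⟩ <;> · rw [heq] at hY; omega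
    · rw [h1] at hY ⊢
      refine ⟨⟨hY, by omega⟩, ?_, fun _ _ => ⟨⟨h2, by omega⟩, ⟨hY, by omega⟩⟩⟩
      intro heq hpr
      refine ⟨⟨hpr, ?_⟩, ⟨by rw [heq] at hY; exact hY, ?_⟩⟩ <;> · rw [heq] at hY; omega
  exact ⟨fun p hp => (key p hp).1, fun p hp => (key p hp).2.1, fun p hp => (key p hp).2.2⟩
end
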